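/- arXiv:0804.4245 — 2 statements merged into one kernel-verified Lean document; each statement's English description precedes it below -/
import Mathlib

section
/- Let N be a symmetric k×k matrix over the field ℤ/2, with k ≥ 1. Then the genus generating polynomial F_N(x) = Σ_{I ⊆ {1,…,k}} x^{corank N_I + corank N_{Iᶜ}} has degree at most k, and its degree is exactly k if and only if every diagonal entry of N is zero and the simple graph on {1, …, k} in which distinct i and j are adjacent exactly when N_{ij} = 1 is bipartite. -/
/-- The corank over `ℤ/2` of the principal submatrix of `N` on the rows and columns in `I`:
`|I| - rank N_I`. -/
noncomputable def subCorank {V : Type*} [Fintype V] [DecidableEq V]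
    (N : Matrix V V (ZMod 2)) (I : Finset V) : ℕ :=
  I.card - (N.submatrix (fun i : I => (i : V)) fun i : I => (i : V)).rank

/-- The genus generating polynomial of a symmetric matrix `N` over `ℤ/2`:
`F_N(x) = Σ_{I ⊆ V} x ^ (corank N_I + corank N_{V∖I})`. -/
noncomputable def genusPoly {V : Type*} [Fintype V] [DecidableEq V]
    (N : Matrix V V (ZMod 2)) : Polynomial ℕ :=
  ∑ I : Finset V, Polynomial.X ^ (subCorank N I + subCorank N Iᶜ)

/-- The simple graph of a symmetric `ℤ/2` matrix: distinct `i` and `j` are adjacent exactly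
when `N i j = 1`. -/
def adjGraph {V : Type*} (N : Matrix V V (ZMod 2)) (h : N.IsSymm) : SimpleGraph V where
  Adj i j := i ≠ j ∧ N i j = 1
  symm := ⟨by
    rintro i j ⟨h1, h2⟩
    exact ⟨h1.symm, by rw [h.apply i j]; exact h2⟩⟩
  loopless := ⟨fun i hi => hi.1 rfl⟩

/-! Every exponent `corank N_I + corank N_{Iᶜ}` is at most `|I| + |Iᶜ| = |V|`, and it equals `|V|`
exactly when both principal blocks `N_I` and `N_{Iᶜ}` have rank zero, i.e. vanish. Such a splitting
`V = I ⊔ Iᶜ` is the same thing as a zero diagonal together with a `2`-colouring of the graph of `N`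
with colour classes `I` and `Iᶜ`. As the coefficients lie in `ℕ`, nothing cancels: the degree is
`|V|` as soon as one exponent is. -/

open Finset Polynomial

theorem Matrix.rank_eq_zero_iff {m n K : Type*} [Fintype m] [Fintype n] [Field K]
    {A : Matrix m n K} : A.rank = 0 ↔ A = 0 := by
  classical
  rw [Matrix.rank, Submodule.finrank_eq_zero, LinearMap.range_eq_bot, ← Matrix.toLin'_apply',
    LinearEquiv.map_eq_zero_iff]

section GenusPoly

variable {V : Type*} [Fintype V] [DecidableEq V] (N : Matrix V V (ZMod 2))

theorem subCorank_le_card (I : Finset V) : subCorank N I ≤ #I :=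
  Nat.sub_le _ _

theorem subCorank_eq_card_iff (I : Finset V) :
    subCorank N I = #I ↔ ∀ i ∈ I, ∀ j ∈ I, N i j = 0 := by
  have hrank := (N.submatrix ((↑) : I → V) ((↑) : I → V)).rank_le_card_width
  rw [Fintype.card_coe] at hrank
  rw [subCorank, Nat.sub_eq_iff_eq_add hrank, left_eq_add, Matrix.rank_eq_zero_iff,
    ← Matrix.ext_iff]
  simp only [Matrix.submatrix_apply, Matrix.zero_apply, Subtype.forall]

theorem subCorank_add_subCorank_compl_le_card (I : Finset V) :
    subCorank N I + subCorank N Iᶜ ≤ Fintype.card V :=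
  I.card_add_card_compl ▸ add_le_add (subCorank_le_card N I) (subCorank_le_card N Iᶜ)

theorem subCorank_add_subCorank_compl_eq_card_iff (I : Finset V) :
    subCorank N I + subCorank N Iᶜ = Fintype.card V ↔
      ∀ i j, (i ∈ I ↔ j ∈ I) → N i j = 0 := by
  have hI := subCorank_le_card N I
  have hIc := subCorank_le_card N Iᶜ
  have hcard := I.card_add_card_compl
  have hsplit : subCorank N I + subCorank N Iᶜ = Fintype.card V ↔
      subCorank N I = #I ∧ subCorank N Iᶜ = #Iᶜ := by omega
  rw [hsplit, subCorank_eq_card_iff, subCorank_eq_card_iff]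
  constructor
  · rintro ⟨hzero, hzero_compl⟩ i j hij
    by_cases hi : i ∈ I
    · exact hzero i hi j (hij.mp hi)
    · exact hzero_compl i (mem_compl.mpr hi) j (mem_compl.mpr (hi ∘ hij.mpr))
  · intro h
    refine ⟨fun i hi j hj => h i j (iff_of_true hi hj), fun i hi j hj => h i j ?_⟩
    exact iff_of_false (mem_compl.mp hi) (mem_compl.mp hj)

theorem coeff_genusPoly (m : ℕ) :
    (genusPoly N).coeff m = #{I : Finset V | subCorank N I + subCorank N Iᶜ = m} := by
  rw [genusPoly, finsetSum_coeff, card_filter]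
  simp only [coeff_X_pow, eq_comm]

theorem coeff_genusPoly_ne_zero_iff {m : ℕ} :
    (genusPoly N).coeff m ≠ 0 ↔ ∃ I : Finset V, subCorank N I + subCorank N Iᶜ = m := by
  simp [coeff_genusPoly]

theorem genusPoly_ne_zero : genusPoly N ≠ 0 := fun h =>
  (coeff_genusPoly_ne_zero_iff N).mpr ⟨∅, rfl⟩ (by rw [h, coeff_zero])

theorem natDegree_genusPoly_le : (genusPoly N).natDegree ≤ Fintype.card V :=
  natDegree_sum_le_of_forall_le _ _ fun I _ =>
    (natDegree_X_pow _).trans_le (subCorank_add_subCorank_compl_le_card N I)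

theorem natDegree_genusPoly_eq_card_iff :
    (genusPoly N).natDegree = Fintype.card V ↔
      ∃ I : Finset V, ∀ i j, (i ∈ I ↔ j ∈ I) → N i j = 0 := by
  simp only [← subCorank_add_subCorank_compl_eq_card_iff, ← coeff_genusPoly_ne_zero_iff]
  refine ⟨fun h => ?_, natDegree_eq_of_le_of_coeff_ne_zero (natDegree_genusPoly_le N)⟩
  rw [← h]
  exact mt leadingCoeff_eq_zero.mp (genusPoly_ne_zero N)

theorem exists_finset_zero_blocks_iff_colorable (hN : N.IsSymm) :
    (∃ I : Finset V, ∀ i j, (i ∈ I ↔ j ∈ I) → N i j = 0) ↔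
      (∀ i, N i i = 0) ∧ (adjGraph N hN).Colorable 2 := by
  constructor
  · rintro ⟨I, hI⟩
    refine ⟨fun i => hI i i Iff.rfl, ⟨.mk (fun v => if v ∈ I then 0 else 1) ?_⟩⟩
    rintro v w ⟨-, hvw⟩ hcol
    have hsame : v ∈ I ↔ w ∈ I := by split_ifs at hcol <;> simp_all
    exact zero_ne_one (hI v w hsame ▸ hvw)
  · rintro ⟨hdiag, ⟨C⟩⟩
    refine ⟨({v | C v = 0} : Finset V), fun i j hij => ?_⟩
    have hC : C i = C j := by simp only [mem_filter, mem_univ, true_and] at hij; omega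
    obtain rfl | hne := eq_or_ne i j
    · exact hdiag i
    · have eq_zero_of_ne_one : ∀ x : ZMod 2, x ≠ 1 → x = 0 := by decide
      exact eq_zero_of_ne_one _ fun h1 => C.valid ⟨hne, h1⟩ hC

end GenusPoly

theorem genusPoly_natDegree_le_and_eq_iff_general (k : ℕ)
    (N : Matrix (Fin k) (Fin k) (ZMod 2)) (hN : N.IsSymm) :
    (genusPoly N).natDegree ≤ k ∧
      ((genusPoly N).natDegree = k ↔
        (∀ i, N i i = 0) ∧ (adjGraph N hN).Colorable 2) := by
  rw [← exists_finset_zero_blocks_iff_colorable, ← natDegree_genusPoly_eq_card_iff,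
    Fintype.card_fin]
  exact ⟨(natDegree_genusPoly_le N).trans_eq (Fintype.card_fin k), Iff.rfl⟩

/-- For a symmetric `k × k` matrix `N` over `ℤ/2` with `k ≥ 1`, the genus generating
polynomial `F_N` has degree at most `k`, with equality if and only if every diagonal
entry of `N` is zero and the graph of `N` is bipartite. -/
theorem genusPoly_natDegree_le_and_eq_iff (k : ℕ) (hk : 1 ≤ k)
    (N : Matrix (Fin k) (Fin k) (ZMod 2)) (hN : N.IsSymm) :
    (genusPoly N).natDegree ≤ k ∧
      ((genusPoly N).natDegree = k ↔
        (∀ i, N i i = 0) ∧ (adjGraph N hN).Colorable 2) :=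
  genusPoly_natDegree_le_and_eq_iff_general k N hN
end

section
/- Let M be a symmetric k×k matrix and M' a symmetric k'×k' matrix, both over the field ℤ/2, and let M ⊕ M' denote the block-diagonal symmetric (k+k')×(k+k') matrix with blocks M and M'. Then the genus generating polynomials are multiplicative: F_{M ⊕ M'} = F_M · F_{M'}. (This expresses that the generating function for embedding genera is multiplicative with respect to the connected-sum product in the chord diagram algebra and the graph algebra, since the intersection graph of a connected sum of chord diagrams is the disjoint union of the intersection graphs.) -/
/-! Both coranks in `F_N` only see principal submatrices, and a principal submatrix of
`M ⊕ M'` on `I ⊔ J` is, up to reindexing, the block-diagonal sum of `M_I` and `M'_J`. Rank is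
additive on block-diagonal matrices, so the exponent of the term indexed by `I ⊔ J` is the sum
of the exponents of the terms indexed by `I` in `F_M` and by `J` in `F_{M'}`, and the sum over
subsets of a disjoint union factors. -/

open Matrix

def Submodule.prodEquiv {R M N : Type*} [Ring R] [AddCommGroup M] [AddCommGroup N]
    [Module R M] [Module R N] (p : Submodule R M) (q : Submodule R N) :
    p.prod q ≃ₗ[R] p × q where
  toFun x := (⟨x.1.1, x.2.1⟩, ⟨x.1.2, x.2.2⟩)
  invFun y := ⟨(y.1.1, y.2.1), y.1.2, y.2.2⟩
  map_add' _ _ := rfl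
  map_smul' _ _ := rfl
  left_inv _ := rfl
  right_inv _ := rfl

theorem Matrix.rank_fromBlocks_zero_zero {m n K : Type*} [Fintype m] [Fintype n]
    [DecidableEq m] [DecidableEq n] [Field K] (A : Matrix m m K) (B : Matrix n n K) :
    (fromBlocks A 0 0 B).rank = A.rank + B.rank := by
  let e := LinearEquiv.sumArrowLequivProdArrow m n K K
  have hconj : (fromBlocks A 0 0 B).mulVecLin =
      e.symm.toLinearMap ∘ₗ (A.mulVecLin.prodMap B.mulVecLin) ∘ₗ e.toLinearMap := by
    refine LinearMap.ext fun v => funext fun i => ?_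
    rcases i with i | i <;>
      simp [e, fromBlocks_mulVec, Equiv.sumArrowEquivProdArrow,
        LinearEquiv.sumArrowLequivProdArrow]
  rw [rank, hconj, LinearMap.range_comp, LinearMap.range_comp, LinearEquiv.range,
    Submodule.map_top, LinearEquiv.finrank_map_eq, LinearMap.range_prodMap,
    (Submodule.prodEquiv _ _).finrank_eq, Module.finrank_prod, rank, rank]

namespace Finset

variable {α β : Type*}

def disjSumCoeEquiv (s : Finset α) (t : Finset β) : s.disjSum t ≃ s ⊕ t :=
  Equiv.subtypeSum.trans <| Equiv.sumCongr
    (Equiv.subtypeEquivRight fun _ => inl_mem_disjSum)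
    (Equiv.subtypeEquivRight fun _ => inr_mem_disjSum)

theorem compl_disjSum [Fintype α] [Fintype β] [DecidableEq α] [DecidableEq β]
    (s : Finset α) (t : Finset β) : (s.disjSum t)ᶜ = sᶜ.disjSum tᶜ := by
  ext (a | b) <;> simp

end Finset

theorem Matrix.submatrix_fromBlocks_disjSum {V W R : Type*} [Zero R] (M : Matrix V V R)
    (M' : Matrix W W R) (s : Finset V) (t : Finset W) :
    (fromBlocks M 0 0 M').submatrix (fun i : s.disjSum t => (i : V ⊕ W))
      (fun i : s.disjSum t => (i : V ⊕ W)) =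
      (fromBlocks (M.submatrix (fun i : s => (i : V)) (fun i : s => (i : V))) 0 0
        (M'.submatrix (fun i : t => (i : W)) (fun i : t => (i : W)))).submatrix
        (s.disjSumCoeEquiv t) (s.disjSumCoeEquiv t) := by
  ext ⟨i | i, hi⟩ ⟨j | j, hj⟩ <;> rfl

variable {V W : Type*} [Fintype V] [Fintype W] [DecidableEq V] [DecidableEq W]

theorem subCorank_add_rank (N : Matrix V V (ZMod 2)) (I : Finset V) :
    subCorank N I + (N.submatrix (fun i : I => (i : V)) (fun i : I => (i : V))).rank = I.card := by
  have := (N.submatrix (fun i : I => (i : V)) (fun i : I => (i : V))).rank_le_card_height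
  rw [Fintype.card_coe] at this
  exact Nat.sub_add_cancel this

theorem subCorank_fromBlocks_disjSum (M : Matrix V V (ZMod 2)) (M' : Matrix W W (ZMod 2))
    (s : Finset V) (t : Finset W) :
    subCorank (fromBlocks M 0 0 M') (s.disjSum t) = subCorank M s + subCorank M' t := by
  have hrank := subCorank_add_rank (fromBlocks M 0 0 M') (s.disjSum t)
  rw [submatrix_fromBlocks_disjSum, rank_submatrix, rank_fromBlocks_zero_zero,
    Finset.card_disjSum] at hrank
  have := subCorank_add_rank M s
  have := subCorank_add_rank M' t
  omega

theorem genusPoly_fromBlocks (M : Matrix V V (ZMod 2)) (M' : Matrix W W (ZMod 2)) :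
    genusPoly (fromBlocks M 0 0 M') = genusPoly M * genusPoly M' := by
  rw [genusPoly, ← Finset.sumEquiv.symm.toEquiv.sum_comp, genusPoly, genusPoly,
    Finset.sum_mul_sum, ← Finset.univ_product_univ, Finset.sum_product]
  refine Finset.sum_congr rfl fun I _ => Finset.sum_congr rfl fun J _ => ?_
  simp only [OrderIso.coe_toEquiv, Finset.sumEquiv_symm_apply, Finset.compl_disjSum,
    subCorank_fromBlocks_disjSum, ← pow_add]
  ring

theorem genusPoly_blockDiag_mul_general (k k' : ℕ)
    (M : Matrix (Fin k) (Fin k) (ZMod 2))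
    (M' : Matrix (Fin k') (Fin k') (ZMod 2)) :
    genusPoly (Matrix.fromBlocks M 0 0 M') = genusPoly M * genusPoly M' :=
  genusPoly_fromBlocks M M'

/-- **Multiplicativity of the genus generating polynomial.**  For symmetric matrices `M`
(of size `k × k`) and `M'` (of size `k' × k'`) over `ℤ/2`, the genus generating polynomial
of the block-diagonal matrix `M ⊕ M'` is the product of the genus generating polynomials:
`F_{M ⊕ M'} = F_M · F_{M'}`. -/
theorem genusPoly_blockDiag_mul (k k' : ℕ)
    (M : Matrix (Fin k) (Fin k) (ZMod 2)) (hM : M.IsSymm)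
    (M' : Matrix (Fin k') (Fin k') (ZMod 2)) (hM' : M'.IsSymm) :
    genusPoly (Matrix.fromBlocks M 0 0 M') = genusPoly M * genusPoly M' :=
  genusPoly_blockDiag_mul_general k k' M M'
end
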